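/- arXiv:2406.14538 — 2 statements merged into one kernel-verified Lean document; each statement's English description precedes it below -/
import Mathlib

section
/- Let p be a prime, τ ∈ F_p with τ^4 + τ^2 + 1 = 0, and c := τ + 2τ^{-1} (so c^2 = -3τ^2). Define h_τ(a) := (a - c)/(a + c) for a ∈ F_p with a ≠ ±c. Then for all a_1, a_2 ∈ F_p \ {c, -c} with a_1 + a_2 ≠ 0, the element a_3 := (a_1 a_2 - 3τ^2)/(a_1 + a_2) satisfies a_3 ≠ ±c and h_τ(a_3) = h_τ(a_1) · h_τ(a_2). -/
/-- Multiplicativity of `h_τ(a) = (a - c)/(a + c)` with `c = τ + 2τ⁻¹`: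
for `a₁, a₂ ∉ {±c}` with `a₁ + a₂ ≠ 0`, the element
`a₃ = (a₁a₂ - 3τ²)/(a₁ + a₂)` satisfies `a₃ ≠ ±c` and
`h_τ(a₃) = h_τ(a₁) · h_τ(a₂)`. -/
theorem hTau_mul (p : ℕ) [Fact p.Prime] (τ : ZMod p)
    (hτ : τ ^ 4 + τ ^ 2 + 1 = 0) (a₁ a₂ : ZMod p)
    (h₁ : a₁ ≠ τ + 2 * τ⁻¹) (h₁' : a₁ ≠ -(τ + 2 * τ⁻¹))
    (h₂ : a₂ ≠ τ + 2 * τ⁻¹) (h₂' : a₂ ≠ -(τ + 2 * τ⁻¹))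
    (hsum : a₁ + a₂ ≠ 0) :
    (a₁ * a₂ - 3 * τ ^ 2) / (a₁ + a₂) ≠ τ + 2 * τ⁻¹ ∧
    (a₁ * a₂ - 3 * τ ^ 2) / (a₁ + a₂) ≠ -(τ + 2 * τ⁻¹) ∧
    ((a₁ * a₂ - 3 * τ ^ 2) / (a₁ + a₂) - (τ + 2 * τ⁻¹)) /
        ((a₁ * a₂ - 3 * τ ^ 2) / (a₁ + a₂) + (τ + 2 * τ⁻¹)) =
      ((a₁ - (τ + 2 * τ⁻¹)) / (a₁ + (τ + 2 * τ⁻¹))) *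
        ((a₂ - (τ + 2 * τ⁻¹)) / (a₂ + (τ + 2 * τ⁻¹))) := by
  set c := τ + 2 * τ⁻¹ with hc
  have hτ0 : τ ≠ 0 := by
    rintro rfl
    simp at hτ
  have hinv2 : τ⁻¹ = -(τ ^ 3 + τ) :=
    inv_eq_of_mul_eq_one_right (by linear_combination -hτ)
  have hc2 : c ^ 2 = -3 * τ ^ 2 := by
    rw [hc, hinv2]
    linear_combination (4 * τ ^ 2) * hτ
  have n₁ : a₁ - c ≠ 0 := sub_ne_zero.mpr h₁
  have n₂ : a₂ - c ≠ 0 := sub_ne_zero.mpr h₂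
  have d₁ : a₁ + c ≠ 0 := fun h => h₁' (eq_neg_of_add_eq_zero_left h)
  have d₂ : a₂ + c ≠ 0 := fun h => h₂' (eq_neg_of_add_eq_zero_left h)
  have keyA : a₁ * a₂ - 3 * τ ^ 2 - c * (a₁ + a₂) = (a₁ - c) * (a₂ - c) := by
    linear_combination -hc2
  have keyB : a₁ * a₂ - 3 * τ ^ 2 + c * (a₁ + a₂) = (a₁ + c) * (a₂ + c) := by
    linear_combination -hc2
  have g₁ : (a₁ * a₂ - 3 * τ ^ 2) / (a₁ + a₂) ≠ c := by
    intro h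
    rw [div_eq_iff hsum] at h
    exact mul_ne_zero n₁ n₂ (by linear_combination -keyA + h)
  have g₂ : (a₁ * a₂ - 3 * τ ^ 2) / (a₁ + a₂) ≠ -c := by
    intro h
    rw [div_eq_iff hsum] at h
    exact mul_ne_zero d₁ d₂ (by linear_combination -keyB + h)
  refine ⟨g₁, g₂, ?_⟩
  have eA : (a₁ * a₂ - 3 * τ ^ 2) / (a₁ + a₂) - c = (a₁ - c) * (a₂ - c) / (a₁ + a₂) := by
    rw [eq_div_iff hsum, sub_mul, div_mul_cancel₀ _ hsum, ← keyA]
  have eB : (a₁ * a₂ - 3 * τ ^ 2) / (a₁ + a₂) + c = (a₁ + c) * (a₂ + c) / (a₁ + a₂) := by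
    rw [eq_div_iff hsum, add_mul, div_mul_cancel₀ _ hsum, ← keyB]
  rw [eA, eB, div_div_div_comm, div_self hsum, div_one, div_mul_div_comm]
end

section
/- Let τ ∈ F_3^× and for a Laurent polynomial q ∈ F_3[t, t^{-1}] define a[q] := I + q · diag(1 + t^{-1}, 1 + t) · g_3[τ], where g_3[τ] = [[t - τ^2, τ], [-τ(1 + t^{-1} + t), t^{-1} - τ^2]]. Then for all q_1, q_2 ∈ F_3[t, t^{-1}]: a[q_1] · a[q_2] = a[q_1 + q_2], and det(a[q]) = 1 for every q. -/
open LaurentPolynomial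

section Aux

variable {R : Type*} [CommRing R]

lemma auxMM (u v w : R) (huv : u * v = 1)
    (h3 : (3 : R) = 0) (hw : w * w = 1) :
    ((!![1 + v, 0; 0, 1 + u] : Matrix (Fin 2) (Fin 2) R) *
      !![u - 1, w; -w * (1 + v + u), v - 1]) *
    ((!![1 + v, 0; 0, 1 + u] : Matrix (Fin 2) (Fin 2) R) *
      !![u - 1, w; -w * (1 + v + u), v - 1]) = 0 := by
  ext i j
  fin_cases i <;> fin_cases j <;>
    simp [Matrix.mul_apply, Fin.sum_univ_two]
  · linear_combination (2*(u-v)+(u*v-1)-(1+u+v)-4) * huv + (-(2+u+v)) * h3 +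
      (-(1+v)*(1+u)*(1+u+v)) * hw
  · linear_combination (2*(1+v)*w) * huv
  · linear_combination (-2*(1+u)*w*(1+u+v)) * huv
  · linear_combination (2*(v-u)+(u*v-1)-(1+u+v)-4) * huv + (-(2+u+v)) * h3 +
      (-(1+v)*(1+u)*(1+u+v)) * hw

lemma auxDet (u v w : R) (huv : u * v = 1)
    (h3 : (3 : R) = 0) (hw : w * w = 1) (q : R) :
    ((1 : Matrix (Fin 2) (Fin 2) R) +
      q • (((!![1 + v, 0; 0, 1 + u] : Matrix (Fin 2) (Fin 2) R) *
        !![u - 1, w; -w * (1 + v + u), v - 1]))).det = 1 := by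
  rw [Matrix.det_fin_two]
  simp [Matrix.mul_apply, Fin.sum_univ_two]
  linear_combination (2*q + q^2*(1+u)*(1+v)) * huv + (q^2*(1+u)*(1+v)) * h3 +
    (q^2*(1+u)*(1+v)*(1+u+v)) * hw

lemma auxMul (M : Matrix (Fin 2) (Fin 2) R) (hM : M * M = 0) (q₁ q₂ : R) :
    ((1 : Matrix (Fin 2) (Fin 2) R) + q₁ • M) * (1 + q₂ • M) =
      1 + (q₁ + q₂) • M := by
  simp only [add_mul, mul_add, one_mul, mul_one, smul_mul_assoc, mul_smul_comm,
    smul_smul, hM, smul_zero, add_zero, add_smul]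
  abel

end Aux

/-- The additive generator `a[q] = I + q · diag(1 + t⁻¹, 1 + t) · g₃[τ]` over
`𝔽₃[t, t⁻¹]`. -/
noncomputable def addGen3 (τ : ZMod 3) (q : LaurentPolynomial (ZMod 3)) :
    Matrix (Fin 2) (Fin 2) (LaurentPolynomial (ZMod 3)) :=
  1 + q • ((!![1 + T (-1), 0; 0, 1 + T 1] :
      Matrix (Fin 2) (Fin 2) (LaurentPolynomial (ZMod 3))) *
    !![T 1 - C (τ ^ 2), C τ;
      -C τ * (1 + T (-1) + T 1), T (-1) - C (τ ^ 2)])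

/-- For a unit `τ ∈ 𝔽₃`, the maps `q ↦ a[q]` satisfy
`a[q₁] · a[q₂] = a[q₁ + q₂]` and `det (a[q]) = 1`. -/
theorem addGen3_mul_and_det (τ : ZMod 3) (hτ : τ ≠ 0) :
    (∀ q₁ q₂ : LaurentPolynomial (ZMod 3),
        addGen3 τ q₁ * addGen3 τ q₂ = addGen3 τ (q₁ + q₂)) ∧
    (∀ q : LaurentPolynomial (ZMod 3), (addGen3 τ q).det = 1) := by
  have hτ2 : τ ^ 2 = 1 := by revert hτ; revert τ; decide
  have hC : (C (τ ^ 2) : LaurentPolynomial (ZMod 3)) = 1 := by rw [hτ2, map_one]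
  have huv : (T 1 : LaurentPolynomial (ZMod 3)) * T (-1) = 1 := by
    rw [← T_add]; norm_num
  have h3 : (3 : LaurentPolynomial (ZMod 3)) = 0 := by
    rw [show (3 : LaurentPolynomial (ZMod 3)) = C 3 from (map_ofNat C 3).symm,
      show (3 : ZMod 3) = 0 from rfl, map_zero]
  have hw : (C τ : LaurentPolynomial (ZMod 3)) * C τ = 1 := by
    rw [← map_mul, ← pow_two, hτ2, map_one]
  have hMM := auxMM (T 1) (T (-1)) (C τ) huv h3 hw
  have hA : ∀ q, addGen3 τ q = 1 + q •
      ((!![1 + T (-1), 0; 0, 1 + T 1] :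
        Matrix (Fin 2) (Fin 2) (LaurentPolynomial (ZMod 3))) *
      !![T 1 - 1, C τ; -C τ * (1 + T (-1) + T 1), T (-1) - 1]) := by
    intro q; rw [addGen3, hC]
  constructor
  · intro q₁ q₂
    rw [hA, hA, hA, auxMul _ hMM]
  · intro q
    rw [hA]
    exact auxDet (T 1) (T (-1)) (C τ) huv h3 hw q
end
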